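/- Let M be an n×n block matrix over the ring R of 2×2 matrices over 𝔽₂ written as [[A,B],[C,D]] with A ∈ R, B ∈ R^{1×(n−1)}, C ∈ R^{(n−1)×1}, D ∈ R^{(n−1)×(n−1)}, satisfying M M* = I where M* applies the entrywise involution and transposes. Then the matrix I_{n+1} + v·v* with v = (1, A, C)ᵀ equals the product [[1,0,0],[0,A,B],[0,C,D]] · (SWAP of first two block-coordinates) · [[1,0,0],[0,A*,C*],[0,B*,D*]]. -/
import Mathlib


open Matrix

/-- The ring `R` of 2×2 matrices over 𝔽₂. -/
abbrev R2 := Matrix (Fin 2) (Fin 2) (ZMod 2)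

def matStar (M : R2) : R2 := !![M 1 1, M 0 1; M 1 0, M 0 0]

/-- Apply the involution `*` entrywise and transpose. -/
def MStar {m k : Type*} (M : Matrix m k R2) : Matrix k m R2 :=
  Matrix.of fun i j => matStar (M j i)


lemma matStar_one : matStar 1 = 1 := by decide

lemma R2_add_self (a : R2) : a + a = 0 := by
  ext i j
  simp [Matrix.add_apply]
  exact CharTwo.add_self_eq_zero _

/-- The tableau of the universal construction: conjugating a SWAP of the first two
block coordinates by `[[1,0],[0,M]]` yields `I + v v*` where `v = (1, A, C)` is the
first column of `M` prefixed by `1`.  Here `M : Matrix (Fin 1 ⊕ Fin m) _ R2` is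
written in block form with `A = M (inl 0) (inl 0)`, `B` the rest of the first row,
`C` the rest of the first column and `D` the remaining block. -/
theorem universal_construction_tableau (m : ℕ)
    (M : Matrix (Fin 1 ⊕ Fin m) (Fin 1 ⊕ Fin m) R2)
    (hM : M * MStar M = 1) :
    let v : Fin 1 ⊕ (Fin 1 ⊕ Fin m) → R2 :=
      Sum.elim (fun _ => 1) (fun k => M k (Sum.inl 0))
    (1 : Matrix (Fin 1 ⊕ (Fin 1 ⊕ Fin m)) (Fin 1 ⊕ (Fin 1 ⊕ Fin m)) R2) +
      Matrix.of (fun i j => v i * matStar (v j)) =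
    (Matrix.fromBlocks (1 : Matrix (Fin 1) (Fin 1) R2) 0 0 M) *
      ((Equiv.swap (Sum.inl 0 : Fin 1 ⊕ (Fin 1 ⊕ Fin m))
        (Sum.inr (Sum.inl 0))).permMatrix R2) *
    (Matrix.fromBlocks (1 : Matrix (Fin 1) (Fin 1) R2) 0 0 (MStar M)) := by
  intro v
  have h : ∀ k j, (∑ f, M k f * matStar (M j f)) = if k = j then (1:R2) else 0 := by
    intro k j
    have := congrFun (congrFun hM k) j
    simpa [Matrix.mul_apply, MStar, Matrix.one_apply] using this
  funext i j
  rcases i with i | i <;> rcases j with j | j <;>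
    simp [Matrix.mul_apply, Fintype.sum_sum_type, Matrix.one_apply, v, MStar,
        Equiv.Perm.permMatrix, PEquiv.toMatrix_apply, Equiv.toPEquiv_apply,
        Equiv.swap_apply_def, Fin.fin_one_eq_zero, matStar_one]
  · exact R2_add_self 1
  · have hs := h i j
    rw [Fintype.sum_sum_type] at hs
    simp [Fin.sum_univ_one] at hs
    rw [← hs, add_comm (M i (Sum.inl 0) * matStar (M j (Sum.inl 0)))
        (∑ x : Fin m, M i (Sum.inr x) * matStar (M j (Sum.inr x))),
      add_assoc, R2_add_self, add_zero]
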